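/- arXiv:2009.02488 — 6 statements merged into one kernel-verified Lean document; each statement's English description precedes it below -/
import Mathlib

section
/- If g: S → Q is a bijection between subsets of ℝⁿ such that |a − g(a)| ≤ ε for all a ∈ S, then for any point a ∈ S with b = g(a), and any i ≥ 1, the distance from a to its i-th nearest neighbour in S and the distance from b to its i-th nearest neighbour in Q differ by at most 2ε. -/
open Metric Set

/-- The `k`-th nearest neighbour distance from `p` to the set `X` (excluding `p` itself),
counted with multiplicity: the infimum of radii `r` such that the closed ball of radius `r`
around `p` contains at least `k` points of `X \ {p}`. -/
noncomputable def kthNNDist {E : Type*} [MetricSpace E] (X : Set E) (p : E) (k : ℕ) : ℝ :=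
  sInf {r : ℝ | k ≤ Nat.card ↥((X \ {p}) ∩ Metric.closedBall p r)}

lemma shift_mem {E : Type*} [MetricSpace E] (S Q : Set E) (ε : ℝ)
    (hQfin : ∀ p r, (Q ∩ Metric.closedBall p r).Finite)
    (g : E → E) (hg : Set.BijOn g S Q) (hmove : ∀ a ∈ S, dist a (g a) ≤ ε)
    {a : E} (ha : a ∈ S) {i : ℕ} (hi : 1 ≤ i) {r : ℝ}
    (hr : i ≤ Nat.card ↥((S \ {a}) ∩ Metric.closedBall a r)) :
    i ≤ Nat.card ↥((Q \ {g a}) ∩ Metric.closedBall (g a) (r + 2 * ε)) := by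
  set T := (S \ {a}) ∩ Metric.closedBall a r with hT
  set U := (Q \ {g a}) ∩ Metric.closedBall (g a) (r + 2 * ε) with hU
  have hTfin : T.Finite := by
    by_contra h
    rw [Set.Infinite.card_eq_zero h] at hr
    omega
  have hTS : T ⊆ S := fun x hx => hx.1.1
  have hsub : g '' T ⊆ U := by
    rintro _ ⟨x, hx, rfl⟩
    obtain ⟨⟨hxS, hxa⟩, hxb⟩ := hx
    refine ⟨⟨hg.mapsTo hxS, ?_⟩, ?_⟩
    · simp only [Set.mem_singleton_iff]
      intro hgx
      exact hxa (hg.injOn hxS ha hgx)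
    · rw [Metric.mem_closedBall] at hxb ⊢
      calc dist (g x) (g a) ≤ dist (g x) x + dist x a + dist a (g a) := dist_triangle4 _ _ _ _
        _ ≤ ε + r + ε := by
            have h1 := hmove x hxS
            have h2 := hmove a ha
            rw [dist_comm (g x) x]
            linarith
        _ = r + 2 * ε := by ring
  have hUfin : U.Finite := (hQfin (g a) (r + 2 * ε)).subset (fun x hx => ⟨hx.1.1, hx.2⟩)
  have h1 : Nat.card ↥T = Nat.card ↥(g '' T) := by
    rw [Nat.card_coe_set_eq, Nat.card_coe_set_eq,
      Set.ncard_image_of_injOn (hg.injOn.mono hTS)]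
  have h2 : Nat.card ↥(g '' T) ≤ Nat.card ↥U := by
    rw [Nat.card_coe_set_eq, Nat.card_coe_set_eq]
    exact Set.ncard_le_ncard hsub hUfin
  omega

/-- Lemma on perturbed distances: if a bijection `g : S → Q` between locally finite subsets of
`ℝⁿ` moves every point by at most `ε`, then for every `a ∈ S` and `i ≥ 1` the distances from
`a` and `b = g a` to their `i`-th nearest neighbours in `S` and `Q` differ by at most `2ε`. -/
theorem perturbed_distances {n : ℕ} (S Q : Set (EuclideanSpace ℝ (Fin n))) (ε : ℝ) (hε : 0 < ε)
    (hSfin : ∀ (p : EuclideanSpace ℝ (Fin n)) (r : ℝ), (S ∩ Metric.closedBall p r).Finite)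
    (hQfin : ∀ (p : EuclideanSpace ℝ (Fin n)) (r : ℝ), (Q ∩ Metric.closedBall p r).Finite)
    (g : EuclideanSpace ℝ (Fin n) → EuclideanSpace ℝ (Fin n))
    (hg : Set.BijOn g S Q) (hmove : ∀ a ∈ S, dist a (g a) ≤ ε) :
    ∀ a ∈ S, ∀ i : ℕ, 1 ≤ i →
      |kthNNDist S a i - kthNNDist Q (g a) i| ≤ 2 * ε := by
  intro a ha i hi
  set b := g a with hb
  -- the inverse bijection
  set h := Function.invFunOn g S with hh
  have hinv : Set.InvOn h g S Q := hg.invOn_invFunOn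
  have hg' : Set.BijOn h Q S := Set.BijOn.symm hinv.symm hg
  have hha : h b = a := hinv.1 ha
  have hmove' : ∀ q ∈ Q, dist q (h q) ≤ ε := by
    intro q hq
    have h1 : g (h q) = q := hinv.2 hq
    have h2 := hmove (h q) (hg'.mapsTo hq)
    rw [h1] at h2
    rwa [dist_comm]
  -- shift facts both ways
  have fwd : ∀ r : ℝ, i ≤ Nat.card ↥((S \ {a}) ∩ Metric.closedBall a r) →
      i ≤ Nat.card ↥((Q \ {b}) ∩ Metric.closedBall b (r + 2 * ε)) :=
    fun r hr => shift_mem S Q ε hQfin g hg hmove ha hi hr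
  have bwd : ∀ r : ℝ, i ≤ Nat.card ↥((Q \ {b}) ∩ Metric.closedBall b r) →
      i ≤ Nat.card ↥((S \ {a}) ∩ Metric.closedBall a (r + 2 * ε)) := by
    intro r hr
    have := shift_mem Q S ε hSfin h hg' hmove' (hg.mapsTo ha) hi (r := r) hr
    rwa [show h (g a) = a from hha] at this
  set AS := {r : ℝ | i ≤ Nat.card ↥((S \ {a}) ∩ Metric.closedBall a r)} with hAS
  set AQ := {r : ℝ | i ≤ Nat.card ↥((Q \ {b}) ∩ Metric.closedBall b r)} with hAQ
  have hASbd : ∀ r ∈ AS, (0:ℝ) ≤ r := by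
    intro r hr
    by_contra hneg
    push_neg at hneg
    have : Metric.closedBall a r = ∅ := Metric.closedBall_eq_empty.mpr hneg
    rw [hAS] at hr
    simp only [Set.mem_setOf_eq, this, Set.inter_empty, Nat.card_eq_fintype_card] at hr
    simp at hr
    omega
  have hAQbd : ∀ r ∈ AQ, (0:ℝ) ≤ r := by
    intro r hr
    by_contra hneg
    push_neg at hneg
    have : Metric.closedBall b r = ∅ := Metric.closedBall_eq_empty.mpr hneg
    rw [hAQ] at hr
    simp only [Set.mem_setOf_eq, this, Set.inter_empty, Nat.card_eq_fintype_card] at hr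
    simp at hr
    omega
  have hASbdd : BddBelow AS := ⟨0, hASbd⟩
  have hAQbdd : BddBelow AQ := ⟨0, hAQbd⟩
  show |sInf AS - sInf AQ| ≤ 2 * ε
  by_cases hS : AS.Nonempty
  · have hQne : AQ.Nonempty := by
      obtain ⟨r, hr⟩ := hS
      exact ⟨r + 2 * ε, fwd r hr⟩
    rw [abs_le]
    constructor
    · -- sInf AQ ≤ sInf AS + 2ε
      have : sInf AQ ≤ sInf AS + 2 * ε := by
        have : sInf AQ - 2 * ε ≤ sInf AS :=
          le_csInf hS (fun r hr => by
            have := csInf_le hAQbdd (fwd r hr); linarith)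
        linarith
      linarith
    · -- sInf AS ≤ sInf AQ + 2ε
      have : sInf AS - 2 * ε ≤ sInf AQ :=
        le_csInf hQne (fun r hr => by
          have := csInf_le hASbdd (bwd r hr); linarith)
      linarith
  · have hQempty : ¬ AQ.Nonempty := by
      rintro ⟨r, hr⟩
      exact hS ⟨r + 2 * ε, bwd r hr⟩
    rw [Set.not_nonempty_iff_eq_empty] at hS hQempty
    rw [hS, hQempty, Real.sInf_empty, sub_self, abs_zero]
    linarith
end

section
/- Let S, Q be finite sets of the same cardinality m in ℝⁿ and suppose there is a bijection g: S → Q with |a − g(a)| ≤ ε for all a ∈ S. Then |AMD_k(S) − AMD_k(Q)| ≤ 2ε for every 1 ≤ k ≤ m−1. -/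
open Metric Set

/-- The Average Minimum Distance of a finite point set. -/
noncomputable def AMD {E : Type*} [MetricSpace E] (S : Finset E) (k : ℕ) : ℝ :=
  (∑ p ∈ S, kthNNDist (↑S) p k) / S.card

lemma kth_aux {E : Type*} [MetricSpace E] (S Q : Finset E) (p : E) (hp : p ∈ S)
    (k : ℕ) (hk1 : 1 ≤ k) (hk : k + 1 ≤ S.card) (ε : ℝ) (hε : 0 ≤ ε)
    (g : E → E) (hg : Set.BijOn g ↑S ↑Q) (hmove : ∀ a ∈ S, dist a (g a) ≤ ε) :
    kthNNDist ↑Q (g p) k ≤ kthNNDist ↑S p k + 2 * ε := by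
  have hQbdd : BddBelow {r : ℝ | k ≤ Nat.card ↥(((↑Q : Set E) \ {g p}) ∩ Metric.closedBall (g p) r)} := by
    refine ⟨0, fun r hr => ?_⟩
    by_contra h
    push_neg at h
    rw [Set.mem_setOf_eq, Metric.closedBall_eq_empty.mpr h, Set.inter_empty] at hr
    simp at hr; omega
  have hSne : {r : ℝ | k ≤ Nat.card ↥(((↑S : Set E) \ {p}) ∩ Metric.closedBall p r)}.Nonempty := by
    refine ⟨S.sup' ⟨p, hp⟩ (fun x => dist x p), ?_⟩
    have heq : ((↑S : Set E) \ {p}) ∩ Metric.closedBall p (S.sup' ⟨p, hp⟩ (fun x => dist x p))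
        = (↑S : Set E) \ {p} := by
      apply Set.inter_eq_left.mpr
      intro x hx
      exact Metric.mem_closedBall.mpr (Finset.le_sup' (f := fun x => dist x p) hx.1)
    classical
    rw [Set.mem_setOf_eq, heq, Nat.card_coe_set_eq, ← Finset.coe_erase,
      Set.ncard_coe_finset]
    have : (S.erase p).card = S.card - 1 := Finset.card_erase_of_mem hp
    omega
  have key : ∀ r ∈ {r : ℝ | k ≤ Nat.card ↥(((↑S : Set E) \ {p}) ∩ Metric.closedBall p r)},
      sInf {r : ℝ | k ≤ Nat.card ↥(((↑Q : Set E) \ {g p}) ∩ Metric.closedBall (g p) r)} ≤ r + 2 * ε := by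
    intro r hr
    apply csInf_le hQbdd
    rw [Set.mem_setOf_eq]
    have hmono : Nat.card ↥(((↑S : Set E) \ {p}) ∩ Metric.closedBall p r)
        ≤ Nat.card ↥(((↑Q : Set E) \ {g p}) ∩ Metric.closedBall (g p) (r + 2 * ε)) := by
      rw [Nat.card_coe_set_eq, Nat.card_coe_set_eq]
      apply Set.ncard_le_ncard_of_injOn g
      · rintro x ⟨⟨hxS, hxp⟩, hxb⟩
        refine ⟨⟨hg.mapsTo hxS, ?_⟩, ?_⟩
        · intro hxeq
          exact hxp (hg.injOn hxS hp hxeq)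
        · rw [Metric.mem_closedBall]
          have h1 : dist (g x) (g p) ≤ dist (g x) x + dist x p + dist p (g p) :=
            dist_triangle4 _ _ _ _
          have h2 : dist x (g x) ≤ ε := hmove x hxS
          have h3 : dist p (g p) ≤ ε := hmove p hp
          have h4 : dist x p ≤ r := Metric.mem_closedBall.mp hxb
          rw [dist_comm (g x) x] at h1
          linarith
      · exact hg.injOn.mono (fun x hx => hx.1.1)
    exact le_trans hr hmono
  have h1 : sInf {r : ℝ | k ≤ Nat.card ↥(((↑Q : Set E) \ {g p}) ∩ Metric.closedBall (g p) r)} - 2 * ε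
      ≤ sInf {r : ℝ | k ≤ Nat.card ↥(((↑S : Set E) \ {p}) ∩ Metric.closedBall p r)} := by
    apply le_csInf hSne
    intro r hr
    linarith [key r hr]
  unfold kthNNDist
  linarith

/-- Continuity of AMD: if finite `m`-point sets `S, Q ⊂ ℝⁿ` admit a bijection `g : S → Q`
moving every point by at most `ε`, then `|AMD_k S − AMD_k Q| ≤ 2ε` for `1 ≤ k ≤ m − 1`. -/
theorem AMD_continuity {n m : ℕ} (S Q : Finset (EuclideanSpace ℝ (Fin n)))
    (hS : S.card = m) (hQ : Q.card = m) (ε : ℝ) (hε : 0 < ε)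
    (g : EuclideanSpace ℝ (Fin n) → EuclideanSpace ℝ (Fin n))
    (hg : Set.BijOn g ↑S ↑Q) (hmove : ∀ a ∈ S, dist a (g a) ≤ ε) :
    ∀ k : ℕ, 1 ≤ k → k ≤ m - 1 → |AMD S k - AMD Q k| ≤ 2 * ε := by
  intro k hk1 hkm
  have hm2 : 2 ≤ m := by omega
  have hkS : k + 1 ≤ S.card := by omega
  have hkQ : k + 1 ≤ Q.card := by omega
  -- inverse function
  have hne : Nonempty (EuclideanSpace ℝ (Fin n)) := ⟨0⟩
  set h := Function.invFunOn g ↑S with hh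
  have hinv : Set.InvOn h g ↑S ↑Q := hg.invOn_invFunOn
  have hgsymm : Set.BijOn h ↑Q ↑S := Set.BijOn.symm hinv.symm hg
  have hmoveh : ∀ b ∈ Q, dist b (h b) ≤ ε := by
    intro b hb
    have hbS : h b ∈ S := hgsymm.mapsTo hb
    have : g (h b) = b := hinv.2 hb
    calc dist b (h b) = dist (h b) (g (h b)) := by rw [this, dist_comm]
      _ ≤ ε := hmove _ hbS
  -- pointwise bound
  have hpoint : ∀ p ∈ S, |kthNNDist ↑S p k - kthNNDist ↑Q (g p) k| ≤ 2 * ε := by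
    intro p hp
    rw [abs_sub_le_iff]
    constructor
    · have := kth_aux Q S (g p) (hg.mapsTo hp) k hk1 hkQ ε hε.le h hgsymm hmoveh
      rw [hinv.1 hp] at this
      linarith
    · have := kth_aux S Q p hp k hk1 hkS ε hε.le g hg hmove
      linarith
  -- reindex the Q-sum
  have hsum : ∑ q ∈ Q, kthNNDist ↑Q q k = ∑ p ∈ S, kthNNDist ↑Q (g p) k := by
    refine (Finset.sum_bij (fun p _ => g p) ?_ ?_ ?_ ?_).symm
    · intro a ha; exact hg.mapsTo ha
    · intro a ha b hb hab; exact hg.injOn ha hb hab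
    · intro b hb
      obtain ⟨a, ha, hab⟩ := hg.surjOn hb
      exact ⟨a, ha, hab⟩
    · intro a ha; rfl
  have hmpos : (0 : ℝ) < m := by positivity
  have hAMD : AMD S k - AMD Q k = (∑ p ∈ S, (kthNNDist ↑S p k - kthNNDist ↑Q (g p) k)) / m := by
    unfold AMD
    rw [hS, hQ, hsum, Finset.sum_sub_distrib, sub_div]
  rw [hAMD, abs_div, abs_of_pos hmpos, div_le_iff₀ hmpos]
  calc |∑ p ∈ S, (kthNNDist ↑S p k - kthNNDist ↑Q (g p) k)|
      ≤ ∑ p ∈ S, |kthNNDist ↑S p k - kthNNDist ↑Q (g p) k| := Finset.abs_sum_le_sum_abs _ _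
    _ ≤ ∑ _p ∈ S, 2 * ε := Finset.sum_le_sum hpoint
    _ = S.card * (2 * ε) := by rw [Finset.sum_const, nsmul_eq_mul]
    _ = 2 * ε * m := by rw [hS]; ring
end

section
/- Let S ⊂ ℝⁿ be a (U,m)-set with unit cell U of diameter d and point packing coefficient c(S) = (Vol(U)/(m·Vₙ))^{1/n}. Then for any point p ∈ S and any k ≥ 1, the distance d_k(S;p) from p to its k-th nearest neighbour in S satisfies c(S)·k^{1/n} − d < d_k(S;p) ≤ c(S)·k^{1/n} + d. -/
open Metric Set MeasureTheory

/-- The lattice generated by a basis `b` of `ℝⁿ`: all integer linear combinations. -/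
def latticeOf {n : ℕ} (b : Module.Basis (Fin n) ℝ (EuclideanSpace ℝ (Fin n))) :
    Set (EuclideanSpace ℝ (Fin n)) :=
  {x | ∃ c : Fin n → ℤ, x = ∑ i, (c i : ℝ) • b i}

/-- The unit cell of the basis `b`. -/
def unitCellOf {n : ℕ} (b : Module.Basis (Fin n) ℝ (EuclideanSpace ℝ (Fin n))) :
    Set (EuclideanSpace ℝ (Fin n)) :=
  {x | ∀ i, b.repr x i ∈ Set.Ico (0 : ℝ) 1}

/-!
The floor map of the basis sends a point to the lattice vector `v` of the cell `v + U` containing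
it. The cells meeting the ball `B(p, r)` cover it and lie inside `B(p, r + d)`; since each cell
carries `m` points of `S` and has volume `vol U`, the number `N(r)` of points of `S` in `B(p, r)`
satisfies `N(r) vol U ≤ m Vₙ (r + d)ⁿ` and `m Vₙ rⁿ ≤ N(r + d) vol U`. As `d_k(S; p)` is the
least `r` with `N(r) > k`, the first inequality at `N(r) ≥ k + 1` gives the strict lower bound
and the second, at radii slightly above `c k^{1/n}`, the upper bound.
-/

open Module Submodule ZSpan

section Lattice

variable {E ι : Type*} [NormedAddCommGroup E] [NormedSpace ℝ E]

/-- `S` is a `(U, m)`-set for the fundamental domain `U` of `b`. -/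
def IsUMSet (b : Basis ι ℝ E) (S : Set E) (m : ℕ) : Prop :=
  ∀ v : span ℤ (range b), Nat.card ↥(S ∩ (((v : E) + ·) '' fundamentalDomain b)) = m

/-- The point packing coefficient `c(S)` of a `(U, m)`-set. -/
noncomputable def packingCoeff [MeasurableSpace E] (μ : Measure E) (b : Basis ι ℝ E) (m : ℕ) :
    ℝ :=
  (μ.real (fundamentalDomain b) / (m * μ.real (ball (0 : E) 1))) ^ ((1 : ℝ) / finrank ℝ E)

variable [Fintype ι] (b : Basis ι ℝ E)

namespace ZSpan

lemma floor_coe (v : span ℤ (range b)) : floor b v = v :=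
  Subtype.ext (floor_eq_self_of_mem b v v.2)

lemma preimage_floor_singleton (v : span ℤ (range b)) :
    floor b ⁻¹' {v} = ((v : E) + ·) '' fundamentalDomain b := by
  ext x
  rw [image_add_left, mem_preimage, mem_preimage, mem_singleton_iff, ← vadd_eq_add,
    ← NegMemClass.coe_neg, ← Submodule.vadd_def, vadd_mem_fundamentalDomain, neg_inj, eq_comm]

lemma dist_le_diam_of_floor_eq {x y : E} (h : floor b x = floor b y) :
    dist x y ≤ diam (fundamentalDomain b) := by
  have hfract : x - y = fract b x - fract b y := by simp [fract_apply, h]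
  rw [dist_eq_norm, hfract, ← dist_eq_norm]
  exact dist_le_diam_of_mem (fundamentalDomain_isBounded b) (fract_mem_fundamentalDomain b x)
    (fract_mem_fundamentalDomain b y)

lemma preimage_image_floor_closedBall_subset (p : E) (r : ℝ) :
    floor b ⁻¹' (floor b '' closedBall p r) ⊆ closedBall p (r + diam (fundamentalDomain b)) := by
  rintro x ⟨y, hy, hxy⟩
  rw [mem_closedBall] at hy ⊢
  linarith [dist_triangle x y p, dist_le_diam_of_floor_eq b hxy.symm]

lemma finite_image_floor_closedBall [ProperSpace E] (p : E) (r : ℝ) :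
    (floor b '' closedBall p r).Finite := by
  refine ((setFinite_inter b (isBounded_closedBall (x := p)
    (r := r + diam (fundamentalDomain b)))).preimage (f := ((↑) : span ℤ (range b) → E))
      Subtype.val_injective.injOn).subset ?_
  rintro _ ⟨x, hx, rfl⟩
  have hx' : (floor b x : E) ∈ floor b ⁻¹' (floor b '' closedBall p r) :=
    ⟨x, hx, (floor_coe b _).symm⟩
  exact ⟨preimage_image_floor_closedBall_subset b p r hx', (floor b x).2⟩

lemma exists_finset_closedBall_subset_preimage_floor [ProperSpace E] (p : E) (r : ℝ) :
    ∃ F : Finset (span ℤ (range b)), closedBall p r ⊆ floor b ⁻¹' F ∧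
      floor b ⁻¹' F ⊆ closedBall p (r + diam (fundamentalDomain b)) :=
  ⟨(finite_image_floor_closedBall b p r).toFinset, by simpa using subset_preimage_image _ _,
    by simpa using preimage_image_floor_closedBall_subset b p r⟩

lemma measureReal_preimage_floor [MeasurableSpace E] [BorelSpace E] (μ : Measure E)
    [μ.IsAddLeftInvariant] (F : Finset (span ℤ (range b))) :
    μ.real (floor b ⁻¹' F) = F.card * μ.real (fundamentalDomain b) := by
  have hcell : ∀ v, MeasurableSet (floor b ⁻¹' {v}) := fun v => by
    rw [preimage_floor_singleton, image_add_left]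
    exact measurable_const_add _ (fundamentalDomain_measurableSet b)
  rw [measureReal_def, ← Finset.set_biUnion_preimage_singleton,
    measure_biUnion_finset (fun v _ w _ hvw => (disjoint_singleton.2 hvw).preimage _)
      (fun v _ => hcell v)]
  simp [preimage_floor_singleton, image_add_left, measure_preimage_add, measureReal_def]

end ZSpan

namespace IsUMSet

variable {b} {S : Set E} {m : ℕ}

lemma finite_inter_preimage_floor_singleton (hS : IsUMSet b S m) (hm : 0 < m)
    (v : span ℤ (range b)) : (S ∩ floor b ⁻¹' {v}).Finite := by
  have h := hS v
  rw [← preimage_floor_singleton] at h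
  exact finite_coe_iff.mp (Nat.finite_of_card_ne_zero (h ▸ hm.ne'))

lemma ncard_inter_preimage_floor_singleton (hS : IsUMSet b S m) (v : span ℤ (range b)) :
    (S ∩ floor b ⁻¹' {v}).ncard = m := by
  rw [← Nat.card_coe_set_eq, preimage_floor_singleton, hS v]

lemma finite_inter_preimage_floor (hS : IsUMSet b S m) (hm : 0 < m)
    (F : Finset (span ℤ (range b))) : (S ∩ floor b ⁻¹' F).Finite := by
  rw [← Finset.set_biUnion_preimage_singleton, inter_iUnion₂]
  exact F.finite_toSet.biUnion fun v _ => hS.finite_inter_preimage_floor_singleton hm v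

lemma ncard_inter_preimage_floor (hS : IsUMSet b S m) (hm : 0 < m)
    (F : Finset (span ℤ (range b))) : (S ∩ floor b ⁻¹' F).ncard = m * F.card := by
  rw [← Finset.set_biUnion_preimage_singleton, inter_iUnion₂, ← Finset.set_biUnion_coe,
    F.finite_toSet.ncard_biUnion (fun v _ => hS.finite_inter_preimage_floor_singleton hm v)
      (fun v _ w _ hvw => ((disjoint_singleton.2 hvw).preimage _).inter_left' S |>.inter_right' S),
    finsum_mem_coe_finset]
  simp [hS.ncard_inter_preimage_floor_singleton, mul_comm]

variable [ProperSpace E]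

lemma finite_inter_closedBall (hS : IsUMSet b S m) (hm : 0 < m) (p : E) (r : ℝ) :
    (S ∩ closedBall p r).Finite := by
  obtain ⟨F, hcover, -⟩ := exists_finset_closedBall_subset_preimage_floor b p r
  exact (hS.finite_inter_preimage_floor hm F).subset (inter_subset_inter_right S hcover)

variable [MeasurableSpace E] [BorelSpace E] (μ : Measure E) [μ.IsAddHaarMeasure]

lemma ncard_inter_closedBall_mul_le (hS : IsUMSet b S m) (hm : 0 < m) (p : E) (r : ℝ) :
    (S ∩ closedBall p r).ncard * μ.real (fundamentalDomain b) ≤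
      m * μ.real (closedBall p (r + diam (fundamentalDomain b))) := by
  obtain ⟨F, hcover, hsub⟩ := exists_finset_closedBall_subset_preimage_floor b p r
  have hcount : (S ∩ closedBall p r).ncard ≤ m * F.card :=
    hS.ncard_inter_preimage_floor hm F ▸ ncard_le_ncard (inter_subset_inter_right S hcover)
      (hS.finite_inter_preimage_floor hm F)
  calc (S ∩ closedBall p r).ncard * μ.real (fundamentalDomain b)
      ≤ ((m * F.card : ℕ) : ℝ) * μ.real (fundamentalDomain b) := by gcongr
    _ = m * μ.real (floor b ⁻¹' F) := by
      rw [measureReal_preimage_floor]; push_cast; ring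
    _ ≤ m * μ.real (closedBall p (r + diam (fundamentalDomain b))) := by
      gcongr
      exact measure_closedBall_lt_top.ne

lemma mul_measureReal_closedBall_le (hS : IsUMSet b S m) (hm : 0 < m) (p : E) (r : ℝ) :
    m * μ.real (closedBall p r) ≤
      (S ∩ closedBall p (r + diam (fundamentalDomain b))).ncard *
        μ.real (fundamentalDomain b) := by
  obtain ⟨F, hcover, hsub⟩ := exists_finset_closedBall_subset_preimage_floor b p r
  have hcount : m * F.card ≤ (S ∩ closedBall p (r + diam (fundamentalDomain b))).ncard :=
    hS.ncard_inter_preimage_floor hm F ▸ ncard_le_ncard (inter_subset_inter_right S hsub)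
      (hS.finite_inter_closedBall hm p _)
  calc m * μ.real (closedBall p r)
      ≤ m * μ.real (floor b ⁻¹' F) := by
        gcongr
        exact ((measure_mono hsub).trans_lt measure_closedBall_lt_top).ne
    _ = ((m * F.card : ℕ) : ℝ) * μ.real (fundamentalDomain b) := by
      rw [measureReal_preimage_floor]; push_cast; ring
    _ ≤ _ := by gcongr

end IsUMSet

end Lattice

section PackingCoeff

variable {E ι : Type*} [NormedAddCommGroup E] [NormedSpace ℝ E] [MeasurableSpace E]
  [FiniteDimensional ℝ E] (μ : Measure E) {m : ℕ}

lemma measureReal_unitBall_pos [μ.IsAddHaarMeasure] : 0 < μ.real (ball (0 : E) 1) :=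
  ENNReal.toReal_pos (measure_ball_pos μ 0 one_pos).ne' measure_ball_lt_top.ne

lemma packingCoeff_mul_rpow_pow [Nontrivial E] (b : Basis ι ℝ E) {t : ℝ} (ht : 0 ≤ t) :
    (packingCoeff μ b m * t ^ ((1 : ℝ) / finrank ℝ E)) ^ finrank ℝ E =
      t * μ.real (fundamentalDomain b) / (m * μ.real (ball (0 : E) 1)) := by
  have hE : finrank ℝ E ≠ 0 := finrank_pos.ne'
  rw [packingCoeff, mul_pow, one_div, Real.rpow_inv_natCast_pow (by positivity) hE,
    Real.rpow_inv_natCast_pow ht hE]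
  ring

variable [Fintype ι] [BorelSpace E] [μ.IsAddHaarMeasure] (b : Basis ι ℝ E)

lemma measureReal_fundamentalDomain_pos : 0 < μ.real (fundamentalDomain b) :=
  ENNReal.toReal_pos (measure_fundamentalDomain_ne_zero b)
    (fundamentalDomain_isBounded b).measure_lt_top.ne

lemma packingCoeff_pos (hm : 0 < m) : 0 < packingCoeff μ b m := by
  have := measureReal_fundamentalDomain_pos μ b
  have := measureReal_unitBall_pos μ
  unfold packingCoeff
  positivity

variable [Nontrivial E] {b} {S : Set E}

lemma IsUMSet.packingCoeff_mul_rpow_le (hS : IsUMSet b S m) (hm : 0 < m) (p : E) {r t : ℝ}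
    (hr : 0 ≤ r) (ht : 0 ≤ t) (htS : t ≤ (S ∩ closedBall p r).ncard) :
    packingCoeff μ b m * t ^ ((1 : ℝ) / finrank ℝ E) ≤ r + diam (fundamentalDomain b) := by
  have hd : 0 ≤ diam (fundamentalDomain b) := diam_nonneg
  have := measureReal_unitBall_pos μ
  refine le_of_pow_le_pow_left₀ (finrank_pos (R := ℝ) (M := E)).ne' (by positivity) ?_
  rw [packingCoeff_mul_rpow_pow μ b ht, div_le_iff₀ (by positivity)]
  calc t * μ.real (fundamentalDomain b)
      ≤ (S ∩ closedBall p r).ncard * μ.real (fundamentalDomain b) := by gcongr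
    _ ≤ m * μ.real (closedBall p (r + diam (fundamentalDomain b))) :=
      hS.ncard_inter_closedBall_mul_le μ hm p r
    _ = (r + diam (fundamentalDomain b)) ^ finrank ℝ E * (m * μ.real (ball 0 1)) := by
      rw [Measure.addHaar_real_closedBall μ p (by positivity)]; ring

lemma IsUMSet.lt_ncard_inter_closedBall (hS : IsUMSet b S m) (hm : 0 < m) (p : E) {x t : ℝ}
    (ht : 0 ≤ t) (h : packingCoeff μ b m * t ^ ((1 : ℝ) / finrank ℝ E) < x) :
    t < (S ∩ closedBall p (x + diam (fundamentalDomain b))).ncard := by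
  have hc : 0 ≤ packingCoeff μ b m * t ^ ((1 : ℝ) / finrank ℝ E) := by
    have := packingCoeff_pos μ b hm
    positivity
  have hpow := pow_lt_pow_left₀ h hc (finrank_pos (R := ℝ) (M := E)).ne'
  rw [packingCoeff_mul_rpow_pow μ b ht,
    div_lt_iff₀ (by have := measureReal_unitBall_pos μ; positivity)] at hpow
  refine lt_of_mul_lt_mul_right ?_ (measureReal_fundamentalDomain_pos μ b).le
  calc t * μ.real (fundamentalDomain b)
      < x ^ finrank ℝ E * (m * μ.real (ball 0 1)) := hpow
    _ = m * μ.real (closedBall p x) := by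
      rw [Measure.addHaar_real_closedBall μ p (hc.trans h.le)]; ring
    _ ≤ _ := hS.mul_measureReal_closedBall_le μ hm p x

end PackingCoeff

section NearestNeighbour

variable {E : Type*} [MetricSpace E] {X : Set E} {p : E} {k : ℕ}

lemma kthNNDist_eq_sInf (hp : p ∈ X) (hk : 1 ≤ k) :
    kthNNDist X p k = sInf {r | k < (X ∩ closedBall p r).ncard} := by
  unfold kthNNDist
  congr 1
  ext r
  rw [mem_ofPred_eq, mem_ofPred_eq, sdiff_inter_right_comm, Nat.card_coe_set_eq]
  rcases lt_or_ge r 0 with hr | hr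
  · simp only [closedBall_eq_empty.2 hr, inter_empty, empty_sdiff, ncard_empty]
    omega
  · rw [ncard_sdiff_singleton_of_mem (mem_inter hp (mem_closedBall_self hr))]
    omega

lemma kthNNDist_le_of_lt_ncard {r : ℝ} (hp : p ∈ X) (hk : 1 ≤ k)
    (h : k < (X ∩ closedBall p r).ncard) : kthNNDist X p k ≤ r := by
  rw [kthNNDist_eq_sInf hp hk]
  exact csInf_le ⟨0, fun s hs => nonempty_closedBall.1
    ((nonempty_of_ncard_ne_zero (Nat.ne_zero_of_lt hs)).mono inter_subset_right)⟩ h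

lemma le_kthNNDist {a : ℝ} (hp : p ∈ X) (hk : 1 ≤ k) (hX : ∃ r, k < (X ∩ closedBall p r).ncard)
    (h : ∀ r, 0 ≤ r → k < (X ∩ closedBall p r).ncard → a ≤ r) : a ≤ kthNNDist X p k := by
  rw [kthNNDist_eq_sInf hp hk]
  exact le_csInf hX fun r hr => h r (nonempty_closedBall.1
    ((nonempty_of_ncard_ne_zero (Nat.ne_zero_of_lt hr)).mono inter_subset_right)) hr

end NearestNeighbour

lemma latticeOf_eq_span {n : ℕ} (b : Basis (Fin n) ℝ (EuclideanSpace ℝ (Fin n))) :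
    latticeOf b = span ℤ (range b) := by
  ext x
  rw [SetLike.mem_coe, mem_span_range_iff_exists_fun, latticeOf, mem_ofPred_eq]
  simp only [← Int.cast_smul_eq_zsmul ℝ, eq_comm]

/-- Distance bounds: for a `(U,m)`-set `S ⊂ ℝⁿ` with unit cell `U` of diameter `d` and point
packing coefficient `c(S) = (Vol(U)/(m·Vₙ))^{1/n}`, every point `p ∈ S` and `k ≥ 1` satisfy
`c(S)·k^{1/n} − d < d_k(S;p) ≤ c(S)·k^{1/n} + d`. -/
theorem distance_bounds {n : ℕ} (hn : 0 < n)
    (b : Module.Basis (Fin n) ℝ (EuclideanSpace ℝ (Fin n)))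
    (S : Set (EuclideanSpace ℝ (Fin n))) (m : ℕ) (hm : 0 < m)
    (hUm : ∀ v ∈ latticeOf b, Nat.card ↥(S ∩ ((v + ·) '' unitCellOf b)) = m)
    (d c : ℝ) (hd : d = Metric.diam (unitCellOf b))
    (hc : c = ((volume (unitCellOf b)).toReal /
      (m * (volume (Metric.ball (0 : EuclideanSpace ℝ (Fin n)) 1)).toReal)) ^ ((1 : ℝ) / n))
    (p : EuclideanSpace ℝ (Fin n)) (hp : p ∈ S) (k : ℕ) (hk : 1 ≤ k) :
    c * (k : ℝ) ^ ((1 : ℝ) / n) - d < kthNNDist S p k ∧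
    kthNNDist S p k ≤ c * (k : ℝ) ^ ((1 : ℝ) / n) + d := by
  have : NeZero n := ⟨hn.ne'⟩
  have hS : IsUMSet b S m := fun v => hUm v (latticeOf_eq_span b ▸ v.2)
  have hN : (finrank ℝ (EuclideanSpace ℝ (Fin n)) : ℝ) = n := by simp
  obtain rfl : c = packingCoeff volume b m := by rw [hc, packingCoeff, hN]; rfl
  subst hd
  rw [← hN, show unitCellOf b = fundamentalDomain b from rfl]
  have hmem : ∀ x, packingCoeff volume b m * (k : ℝ) ^ ((1 : ℝ) / finrank ℝ _) < x →
      k < (S ∩ closedBall p (x + diam (fundamentalDomain b))).ncard := fun x hx => by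
    exact_mod_cast hS.lt_ncard_inter_closedBall volume hm p k.cast_nonneg hx
  constructor
  · calc _ < packingCoeff volume b m * ((k : ℝ) + 1) ^ ((1 : ℝ) / finrank ℝ _)
            - diam (fundamentalDomain b) := by
          gcongr ?_ * ?_ - _
          · exact packingCoeff_pos volume b hm
          · exact Real.rpow_lt_rpow k.cast_nonneg (lt_add_one _)
              (one_div_pos.2 (Nat.cast_pos.2 finrank_pos))
      _ ≤ kthNNDist S p k := le_kthNNDist hp hk ⟨_, hmem _ (lt_add_one _)⟩ fun r hr hkr => by
          linarith [hS.packingCoeff_mul_rpow_le volume hm p hr (by positivity)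
            (by exact_mod_cast hkr : (k : ℝ) + 1 ≤ _)]
  · refine le_of_forall_pos_le_add fun ε hε => ?_
    linarith [kthNNDist_le_of_lt_ncard hp hk (hmem _ (lt_add_of_pos_right _ hε))]
end

section
/- There is no continuous map h from the space L of lattices in ℝⁿ (n ≥ 2) to the space B of linear bases of ℝⁿ such that the lattice generated by h(Λ) equals Λ for every lattice Λ. Here B ⊂ ℝ^{n²} carries the Euclidean topology and L carries the quotient topology induced by the map g: B → L sending a basis to the lattice it generates. -/
open Set

/-- The space of linear bases of `ℝⁿ`, as a subspace of `(ℝⁿ)ⁿ ≅ ℝ^{n²}` with the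
Euclidean topology. -/
def BasisSpace (n : ℕ) : Type :=
  {v : Fin n → EuclideanSpace ℝ (Fin n) // LinearIndependent ℝ v ∧
    Submodule.span ℝ (Set.range v) = ⊤}

noncomputable instance (n : ℕ) : TopologicalSpace (BasisSpace n) :=
  instTopologicalSpaceSubtype

/-- The lattice generated by a basis: all integer linear combinations of the basis vectors. -/
def latOf {n : ℕ} (b : BasisSpace n) : Set (EuclideanSpace ℝ (Fin n)) :=
  {x | ∃ c : Fin n → ℤ, x = ∑ i, (c i : ℝ) • b.1 i}

/-- Two bases are equivalent iff they generate the same lattice; the quotient is the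
space of lattices `L` with the quotient topology. -/
def latticeSetoid (n : ℕ) : Setoid (BasisSpace n) :=
  ⟨fun b b' => latOf b = latOf b', ⟨fun _ => rfl, Eq.symm, Eq.trans⟩⟩

/-!
Shearing `e_b ↦ e_b + t e_a` for `t ∈ [0, 1]` traces a closed loop in the space of lattices,
since the bases at `t = 0` and `t = 1` both generate `ℤⁿ`. For a vector `v` of any basis of the
sheared lattice, `v_a - t v_b` is an integer; along the loop it varies continuously, hence is
constant. A continuous section returns the same basis at both ends of the loop, so every vector
of that basis has `v_b = 0`, which is impossible for a basis.
-/

theorem Continuous.eq_of_forall_exists_int_eq {X : Type*} [TopologicalSpace X]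
    [PreconnectedSpace X] {f : X → ℝ} (hf : Continuous f) (hint : ∀ x, ∃ m : ℤ, f x = m)
    (x y : X) : f x = f y := by
  choose g hg using hint
  have hg_cont : Continuous g := Int.isClosedEmbedding_coe_real.continuous_iff.2 <| by
    simpa only [Function.comp_def, ← hg] using hf
  rw [hg, hg, PreconnectedSpace.constant inferInstance hg_cont]

namespace BasisSpace

variable {n : ℕ}

theorem continuous_apply (i j : Fin n) : Continuous fun b : BasisSpace n => b.1 i j :=
  (EuclideanSpace.proj j).continuous.comp ((_root_.continuous_apply i).comp continuous_subtype_val)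

theorem exists_apply_ne_zero (b : BasisSpace n) (j : Fin n) : ∃ i, b.1 i j ≠ 0 := by
  by_contra! h
  have hle : Submodule.span ℝ (range b.1) ≤ LinearMap.ker (EuclideanSpace.proj j :
      EuclideanSpace ℝ (Fin n) →L[ℝ] ℝ).toLinearMap :=
    Submodule.span_le.2 <| range_subset_iff.2 h
  rw [b.2.2] at hle
  simpa using hle (Submodule.mem_top (x := EuclideanSpace.single j 1))

end BasisSpace

section Lattice

variable {n : ℕ}

theorem coe_span_int_eq_latOf (b : BasisSpace n) :
    (Submodule.span ℤ (range b.1) : Set (EuclideanSpace ℝ (Fin n))) = latOf b := by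
  ext x
  simp only [SetLike.mem_coe, Submodule.mem_span_range_iff_exists_fun, latOf, mem_ofPred_eq,
    Int.cast_smul_eq_zsmul, eq_comm]

theorem latOf_eq_of_forall_mem {b b' : BasisSpace n} (h : ∀ i, b.1 i ∈ latOf b')
    (h' : ∀ i, b'.1 i ∈ latOf b) : latOf b = latOf b' := by
  simp only [← coe_span_int_eq_latOf, SetLike.mem_coe] at *
  exact congrArg _ <| le_antisymm (Submodule.span_le.2 <| range_subset_iff.2 h)
    (Submodule.span_le.2 <| range_subset_iff.2 h')

theorem exists_int_eq_of_mem_latOf {b : BasisSpace n} (φ : EuclideanSpace ℝ (Fin n) →+ ℝ)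
    (hφ : ∀ i, ∃ m : ℤ, φ (b.1 i) = m) {x : EuclideanSpace ℝ (Fin n)} (hx : x ∈ latOf b) :
    ∃ m : ℤ, φ x = m := by
  choose m hm using hφ
  obtain ⟨c, rfl⟩ := hx
  exact ⟨∑ i, c i * m i, by simp [Int.cast_smul_eq_zsmul, hm]⟩

theorem mem_latOf_self (b : BasisSpace n) (i : Fin n) : b.1 i ∈ latOf b := by
  rw [← coe_span_int_eq_latOf]
  exact Submodule.subset_span ⟨i, rfl⟩

end Lattice

section Shear

variable {n : ℕ} {a b : Fin n}

noncomputable def shearVec (a b : Fin n) (t : ℝ) (i : Fin n) : EuclideanSpace ℝ (Fin n) :=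
  EuclideanSpace.single i 1 + if i = b then t • EuclideanSpace.single a 1 else 0

theorem single_eq_shearVec_sub (hab : a ≠ b) (t : ℝ) (i : Fin n) :
    EuclideanSpace.single i 1 = shearVec a b t i - if i = b then t • shearVec a b t a else 0 := by
  by_cases hi : i = b <;> simp [shearVec, hi, hab]

theorem shearVec_apply_sub_mul (hab : a ≠ b) (t : ℝ) (i : Fin n) :
    shearVec a b t i a - t * shearVec a b t i b = if i = a then 1 else 0 := by
  by_cases hi : i = b
  · subst hi; simp [shearVec, hab, Ne.symm hab]
  · by_cases hia : i = a <;> simp [shearVec, hi, hia, hab, Ne.symm hab]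

theorem span_shearVec (hab : a ≠ b) (t : ℝ) :
    Submodule.span ℝ (range (shearVec a b t)) = ⊤ := by
  rw [eq_top_iff, ← (EuclideanSpace.basisFun (Fin n) ℝ).toBasis.span_eq, Submodule.span_le]
  rintro _ ⟨i, rfl⟩
  rw [OrthonormalBasis.coe_toBasis, EuclideanSpace.basisFun_apply, single_eq_shearVec_sub hab t]
  refine Submodule.sub_mem _ (Submodule.subset_span ⟨i, rfl⟩) ?_
  split_ifs
  exacts [Submodule.smul_mem _ _ (Submodule.subset_span ⟨a, rfl⟩), Submodule.zero_mem _]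

noncomputable def shear (hab : a ≠ b) (t : ℝ) : BasisSpace n :=
  ⟨shearVec a b t,
    linearIndependent_of_top_le_span_of_card_eq_finrank (span_shearVec hab t).ge (by simp),
    span_shearVec hab t⟩

theorem continuous_shear (hab : a ≠ b) : Continuous (shear hab) := by
  refine Continuous.subtype_mk (continuous_pi fun i => ?_) _
  unfold shearVec
  split_ifs <;> fun_prop

theorem latOf_shear_zero_eq_one (hab : a ≠ b) : latOf (shear hab 0) = latOf (shear hab 1) := by
  have hstd (i : Fin n) : (shear hab 0).1 i = EuclideanSpace.single i 1 := by
    simp [shear, shearVec]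
  apply latOf_eq_of_forall_mem <;> intro i <;> rw [← coe_span_int_eq_latOf, SetLike.mem_coe]
  · rw [hstd, single_eq_shearVec_sub hab 1, one_smul]
    refine Submodule.sub_mem _ (Submodule.subset_span ⟨i, rfl⟩) ?_
    split_ifs
    exacts [Submodule.subset_span ⟨a, rfl⟩, Submodule.zero_mem _]
  · change shearVec a b 1 i ∈ _
    rw [shearVec, one_smul, ← hstd, ← hstd]
    refine Submodule.add_mem _ (Submodule.subset_span ⟨i, rfl⟩) ?_
    split_ifs
    exacts [Submodule.subset_span ⟨a, rfl⟩, Submodule.zero_mem _]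

theorem exists_int_eq_sub_mul_of_mem_latOf_shear (hab : a ≠ b) {t : ℝ}
    {x : EuclideanSpace ℝ (Fin n)} (hx : x ∈ latOf (shear hab t)) :
    ∃ m : ℤ, x a - t * x b = m := by
  refine exists_int_eq_of_mem_latOf
    ((EuclideanSpace.proj a - t • EuclideanSpace.proj b : EuclideanSpace ℝ (Fin n) →L[ℝ] ℝ) :
      EuclideanSpace ℝ (Fin n) →+ ℝ) (fun i => ⟨if i = a then 1 else 0, ?_⟩) hx
  simpa [shear] using shearVec_apply_sub_mul hab t i

end Shear

/-- Discontinuity of reduced cells: for `n ≥ 2` there is no continuous map `h : L → B`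
from the space of lattices in `ℝⁿ` to the space of bases with `g ∘ h = id`, i.e. such that
`h(Λ)` generates `Λ` for every lattice `Λ`. -/
theorem no_continuous_basis_reduction {n : ℕ} (hn : 2 ≤ n) :
    ¬ ∃ h : Quotient (latticeSetoid n) → BasisSpace n,
      Continuous h ∧ ∀ l : Quotient (latticeSetoid n), Quotient.mk (latticeSetoid n) (h l) = l := by
  rintro ⟨h, hcont, hsec⟩
  obtain ⟨a, b, hab⟩ := (Fin.nontrivial_iff_two_le.2 hn).exists_pair_ne
  let loop : ℝ → Quotient (latticeSetoid n) := fun t => Quotient.mk _ (shear hab t)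
  have hloop : loop 0 = loop 1 := Quotient.sound (latOf_shear_zero_eq_one hab)
  let v (i : Fin n) (t : ℝ) : EuclideanSpace ℝ (Fin n) := (h (loop t)).1 i
  have hv_mem (i : Fin n) (t : ℝ) : v i t ∈ latOf (shear hab t) := by
    rw [← Quotient.exact (hsec (loop t))]
    exact mem_latOf_self _ i
  have hv_cont (i j : Fin n) : Continuous fun t => v i t j :=
    (BasisSpace.continuous_apply i j).comp <|
      hcont.comp <| continuous_quot_mk.comp (continuous_shear hab)
  have hb_zero (i : Fin n) : v i 1 b = 0 := by
    have hconst := Continuous.eq_of_forall_exists_int_eq (f := fun t => v i t a - t * v i t b)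
      ((hv_cont i a).sub (continuous_id.mul (hv_cont i b)))
      (fun t => exists_int_eq_sub_mul_of_mem_latOf_shear hab (hv_mem i t)) 0 1
    simp only [v, hloop] at hconst
    linarith
  obtain ⟨i, hi⟩ := (h (loop 1)).exists_apply_ne_zero b
  exact hi (hb_zero i)
end

section
/- Let S ⊂ ℝⁿ be a finite set of m points such that all pairwise distances between distinct points of S are distinct. Then S is determined uniquely up to isometry of ℝⁿ by the m×(m−1) matrix D(S) whose i-th row lists, in increasing order, the distances from the i-th point of S to the other m−1 points, where the rows are given as an unordered multiset. -/
open Metric Set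
open RealInnerProductSpace

/-- The unordered multiset of "rows" of the matrix `D(S; m−1)`: for each point `p` of `S`
(with multiplicity), the multiset of distances from `p` to the other `m − 1` points.
(A sorted row of distances carries exactly the same information as this multiset.) -/
noncomputable def distRows {E : Type*} [MetricSpace E] (S : Finset E) :
    Multiset (Multiset ℝ) :=
  letI := Classical.decEq E
  S.val.map fun p => (S.erase p).val.map (dist p)

/-- From a `Multiset.Rel` between two nodup multisets, extract a bijection realizing it. -/
lemma rel_exists_bijOn {α β : Type*} [Nonempty β] {r : α → β → Prop}
    {s : Multiset α} {t : Multiset β} (h : Multiset.Rel r s t)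
    (hs : s.Nodup) (ht : t.Nodup) :
    ∃ σ : α → β, Set.BijOn σ {x | x ∈ s} {y | y ∈ t} ∧ ∀ a ∈ s, r a (σ a) := by
  classical
  induction h with
  | zero => exact ⟨fun _ => Classical.arbitrary β, by simp, by simp⟩
  | @cons a b s t hab hrel ih =>
    rw [Multiset.nodup_cons] at hs ht
    obtain ⟨σ, hbij, hr⟩ := ih hs.2 ht.2
    refine ⟨Function.update σ a b, ⟨?_, ?_, ?_⟩, ?_⟩
    · intro x hx
      simp only [Multiset.mem_cons, Set.mem_setOf_eq] at hx ⊢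
      rcases hx with rfl | hx
      · simp
      · rw [Function.update_of_ne (by rintro rfl; exact hs.1 hx)]
        exact Or.inr (hbij.1 hx)
    · intro x hx y hy hxy
      simp only [Multiset.mem_cons, Set.mem_setOf_eq] at hx hy
      rcases hx with rfl | hx <;> rcases hy with rfl | hy
      · rfl
      · rw [Function.update_self, Function.update_of_ne (by rintro rfl; exact hs.1 hy)] at hxy
        exact absurd (hxy ▸ hbij.1 hy) ht.1
      · rw [Function.update_self, Function.update_of_ne (by rintro rfl; exact hs.1 hx)] at hxy
        exact absurd (hxy ▸ hbij.1 hx) ht.1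
      · rw [Function.update_of_ne (by rintro rfl; exact hs.1 hx),
          Function.update_of_ne (by rintro rfl; exact hs.1 hy)] at hxy
        exact hbij.2.1 hx hy hxy
    · intro y hy
      simp only [Multiset.mem_cons, Set.mem_setOf_eq] at hy
      rcases hy with rfl | hy
      · exact ⟨a, by simp, by simp⟩
      · obtain ⟨x, hx, rfl⟩ := hbij.2.2 hy
        exact ⟨x, Multiset.mem_cons.mpr (Or.inr hx), by
          rw [Function.update_of_ne (by rintro rfl; exact hs.1 hx)]⟩
    · intro x hx
      rcases Multiset.mem_cons.mp hx with rfl | hx'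
      · simpa using hab
      · rw [Function.update_of_ne (by rintro rfl; exact hs.1 hx')]
        exact hr x hx'

/-- A distance-preserving bijection between finite subsets of a Euclidean space extends to
a global isometry. -/
lemma extend_finite {n : ℕ} (S Q : Finset (EuclideanSpace ℝ (Fin n)))
    (σ : EuclideanSpace ℝ (Fin n) → EuclideanSpace ℝ (Fin n))
    (hbij : Set.BijOn σ ↑S ↑Q)
    (hdist : ∀ p ∈ S, ∀ q ∈ S, dist (σ p) (σ q) = dist p q) :
    ∃ f : EuclideanSpace ℝ (Fin n) → EuclideanSpace ℝ (Fin n),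
      Isometry f ∧ f '' ↑S = ↑Q := by
  classical
  rcases S.eq_empty_or_nonempty with rfl | ⟨p₀, hp₀⟩
  · refine ⟨id, isometry_id, ?_⟩
    have : (↑Q : Set _) ⊆ σ '' (↑(∅ : Finset (EuclideanSpace ℝ (Fin n)))) := hbij.2.2
    simp only [Finset.coe_empty, Set.image_empty, Set.subset_empty_iff] at this ⊢
    simp [this]
  set v : {x // x ∈ S} → EuclideanSpace ℝ (Fin n) := fun i => (i : EuclideanSpace ℝ (Fin n)) - p₀ with hv
  set w : {x // x ∈ S} → EuclideanSpace ℝ (Fin n) := fun i => σ i - σ p₀ with hw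
  have hnorm : ∀ p ∈ S, ∀ q ∈ S, ‖σ p - σ q‖ = ‖p - q‖ := by
    intro p hp q hq
    rw [← dist_eq_norm, ← dist_eq_norm]
    exact hdist p hp q hq
  have hinner : ∀ i j : {x // x ∈ S}, ⟪v i, v j⟫ = ⟪w i, w j⟫ := by
    intro i j
    have h1 := norm_sub_sq_real (v i) (v j)
    have h2 := norm_sub_sq_real (w i) (w j)
    have e1 : v i - v j = (i : EuclideanSpace ℝ (Fin n)) - (j : EuclideanSpace ℝ (Fin n)) := by
      simp only [hv]; abel
    have e2 : w i - w j = σ i - σ j := by simp only [hw]; abel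
    rw [e1] at h1; rw [e2] at h2
    have n1 : ‖σ (i : EuclideanSpace ℝ (Fin n)) - σ (j : EuclideanSpace ℝ (Fin n))‖
        = ‖(i : EuclideanSpace ℝ (Fin n)) - (j : EuclideanSpace ℝ (Fin n))‖ := hnorm _ i.2 _ j.2
    have n2 : ‖w i‖ = ‖v i‖ := hnorm _ i.2 _ hp₀
    have n3 : ‖w j‖ = ‖v j‖ := hnorm _ j.2 _ hp₀
    rw [n1, n2, n3] at h2
    linarith
  -- the linear combination maps
  let lc : ({x // x ∈ S} → EuclideanSpace ℝ (Fin n)) →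
      (({x // x ∈ S} → ℝ) →ₗ[ℝ] EuclideanSpace ℝ (Fin n)) := fun u =>
    { toFun := fun c => ∑ i, c i • u i
      map_add' := by intro c d; simp [add_smul, Finset.sum_add_distrib]
      map_smul' := by intro r c; simp [smul_smul, Finset.smul_sum] }
  have lc_sq : ∀ (u : {x // x ∈ S} → EuclideanSpace ℝ (Fin n)) (c : {x // x ∈ S} → ℝ),
      ‖lc u c‖ ^ 2 = ∑ i, ∑ j, c i * c j * ⟪u i, u j⟫ := by
    intro u c
    rw [← real_inner_self_eq_norm_sq]
    show ⟪∑ i, c i • u i, ∑ j, c j • u j⟫ = _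
    rw [sum_inner]
    refine Finset.sum_congr rfl fun i _ => ?_
    rw [inner_sum]
    refine Finset.sum_congr rfl fun j _ => ?_
    rw [real_inner_smul_left, real_inner_smul_right]
    ring
  set A := lc v
  set B := lc w
  have hAB : ∀ c, ‖A c‖ = ‖B c‖ := by
    intro c
    have h : ‖A c‖ ^ 2 = ‖B c‖ ^ 2 := by
      rw [lc_sq, lc_sq]
      exact Finset.sum_congr rfl fun i _ => Finset.sum_congr rfl fun j _ => by
        rw [hinner i j]
    rw [← Real.sqrt_sq (norm_nonneg (A c)), ← Real.sqrt_sq (norm_nonneg (B c)), h]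
  have hker : LinearMap.ker A ≤ LinearMap.ker B := by
    intro c hc
    rw [LinearMap.mem_ker] at hc ⊢
    have := hAB c
    rw [hc, norm_zero] at this
    exact norm_eq_zero.mp this.symm
  let L₀ : ↥(LinearMap.range A) →ₗ[ℝ] EuclideanSpace ℝ (Fin n) :=
    ((LinearMap.ker A).liftQ B hker).comp
      (A.quotKerEquivRange.symm : ↥(LinearMap.range A) →ₗ[ℝ] _)
  have L₀_apply : ∀ c : {x // x ∈ S} → ℝ, L₀ ⟨A c, LinearMap.mem_range_self A c⟩ = B c := by
    intro c
    have h1 : A.quotKerEquivRange (Submodule.Quotient.mk c)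
        = ⟨A c, LinearMap.mem_range_self A c⟩ := by
      exact Subtype.ext (A.quotKerEquivRange_apply_mk c)
    have h2 : A.quotKerEquivRange.symm ⟨A c, LinearMap.mem_range_self A c⟩
        = Submodule.Quotient.mk c := by
      rw [← h1, LinearEquiv.symm_apply_apply]
    show ((LinearMap.ker A).liftQ B hker) (A.quotKerEquivRange.symm _) = B c
    rw [h2, Submodule.liftQ_apply]
  have L₀_norm : ∀ x : ↥(LinearMap.range A), ‖L₀ x‖ = ‖x‖ := by
    rintro ⟨x, hx⟩
    obtain ⟨c, rfl⟩ := hx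
    rw [L₀_apply c, ← hAB c]
    rfl
  let L : ↥(LinearMap.range A) →ₗᵢ[ℝ] EuclideanSpace ℝ (Fin n) := ⟨L₀, L₀_norm⟩
  let F := L.extend
  have Fvw : ∀ i, F (v i) = w i := by
    intro i
    set c₀ : {x // x ∈ S} → ℝ := Pi.single i 1 with hc₀
    have hA : ∀ c : {x // x ∈ S} → ℝ, A c = ∑ j, c j • v j := fun c => rfl
    have hB : ∀ c : {x // x ∈ S} → ℝ, B c = ∑ j, c j • w j := fun c => rfl
    have hsingle : ∀ u : {x // x ∈ S} → EuclideanSpace ℝ (Fin n),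
        (∑ j, c₀ j • u j) = u i := by
      intro u
      rw [Finset.sum_eq_single i (fun j _ hj => by
        rw [hc₀, Pi.single_eq_of_ne hj]; simp) (by simp)]
      simp [hc₀]
    have hc : A c₀ = v i := by rw [hA, hsingle]
    have hmem : v i ∈ LinearMap.range A := ⟨c₀, hc⟩
    have := L.extend_apply ⟨v i, hmem⟩
    rw [show ((⟨v i, hmem⟩ : ↥(LinearMap.range A)) : EuclideanSpace ℝ (Fin n)) = v i from rfl] at this
    rw [show F (v i) = L.extend (v i) from rfl, this]
    show L₀ ⟨v i, hmem⟩ = w i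
    have : (⟨v i, hmem⟩ : ↥(LinearMap.range A))
        = ⟨A c₀, LinearMap.mem_range_self A _⟩ := by
      exact Subtype.ext hc.symm
    rw [this, L₀_apply]
    rw [hB, hsingle]
  refine ⟨fun x => F (x - p₀) + σ p₀, ?_, ?_⟩
  · apply Isometry.of_dist_eq
    intro x y
    rw [dist_eq_norm, dist_eq_norm]
    have : F (x - p₀) + σ p₀ - (F (y - p₀) + σ p₀) = F (x - p₀) - F (y - p₀) := by abel
    rw [this, ← map_sub]
    rw [F.norm_map]
    congr 1
    abel
  · have himg : ∀ p ∈ S, F (p - p₀) + σ p₀ = σ p := by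
      intro p hp
      have := Fvw ⟨p, hp⟩
      simp only [hv, hw] at this
      rw [this]
      abel
    rw [show (fun x => F (x - p₀) + σ p₀) '' ↑S = σ '' ↑S from
      Set.image_congr fun p hp => himg p hp]
    exact hbij.image_eq

/-- Completeness for generic finite sets: a finite set `S ⊂ ℝⁿ` with all pairwise distances
distinct is determined uniquely up to isometry by the unordered multiset of rows of the
matrix `D(S; m−1)` of ordered distances to neighbours. -/
theorem generic_completeness {n m : ℕ} (S Q : Finset (EuclideanSpace ℝ (Fin n)))
    (hSm : S.card = m) (hQm : Q.card = m)
    (hSgen : ∀ p ∈ S, ∀ q ∈ S, ∀ p' ∈ S, ∀ q' ∈ S, p ≠ q → p' ≠ q' →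
      dist p q = dist p' q' → (p = p' ∧ q = q') ∨ (p = q' ∧ q = p'))
    (hQgen : ∀ p ∈ Q, ∀ q ∈ Q, ∀ p' ∈ Q, ∀ q' ∈ Q, p ≠ q → p' ≠ q' →
      dist p q = dist p' q' → (p = p' ∧ q = q') ∨ (p = q' ∧ q = p'))
    (hrows : distRows S = distRows Q) :
    ∃ f : EuclideanSpace ℝ (Fin n) → EuclideanSpace ℝ (Fin n),
      Isometry f ∧ f '' ↑S = ↑Q := by
  letI := Classical.decEq (EuclideanSpace ℝ (Fin n))
  unfold distRows at hrows
  have hrel := Multiset.rel_map.mp (Multiset.rel_eq.mpr hrows)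
  obtain ⟨σ, hbij, hrow⟩ := rel_exists_bijOn hrel S.nodup Q.nodup
  have hbij' : Set.BijOn σ ↑S ↑Q := hbij
  have hσQ : ∀ p ∈ S, σ p ∈ Q := fun p hp => hbij'.1 hp
  have hdist : ∀ p ∈ S, ∀ q ∈ S, dist (σ p) (σ q) = dist p q := by
    intro p hp q hq
    rcases eq_or_ne p q with rfl | hpq
    · simp
    have hσpq : σ p ≠ σ q := fun h => hpq (hbij'.2.1 hp hq h)
    -- dist p q is in the row of p, hence in the row of σ p
    have hmemp : dist p q ∈ (Q.erase (σ p)).val.map (dist (σ p)) := by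
      rw [← hrow p hp]
      exact Multiset.mem_map.mpr ⟨q, Finset.mem_erase.mpr ⟨hpq.symm, hq⟩, rfl⟩
    have hmemq : dist p q ∈ (Q.erase (σ q)).val.map (dist (σ q)) := by
      rw [← hrow q hq]
      exact Multiset.mem_map.mpr ⟨p, Finset.mem_erase.mpr ⟨hpq, hp⟩, dist_comm q p⟩
    obtain ⟨c, hc, hcd⟩ := Multiset.mem_map.mp hmemp
    obtain ⟨c', hc', hcd'⟩ := Multiset.mem_map.mp hmemq
    replace hc := Finset.mem_erase.mp (Finset.mem_def.mpr hc)
    replace hc' := Finset.mem_erase.mp (Finset.mem_def.mpr hc')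
    have := hQgen (σ p) (hσQ p hp) c hc.2 (σ q) (hσQ q hq) c' hc'.2
      (Ne.symm hc.1) (Ne.symm hc'.1) (by rw [hcd, hcd'])
    rcases this with ⟨h1, _⟩ | ⟨h1, h2⟩
    · exact absurd h1 hσpq
    · rw [← hcd', ← h1, dist_comm]
  exact extend_finite S Q σ hbij' hdist
end

section
/- For the one-dimensional periodic point sets S(r) = {0, r, r+2, 4} + 8ℤ and Q(r) = {0, r+2, 4, r+4} + 8ℤ with 0 < r ≤ 1, one has AMD₁(S(r)) = 1, AMD₂(S(r)) = 5/2, AMD₁(Q(r)) = 1 + r/2, and AMD₂(Q(r)) = 5/2 − r/2. In particular, for 0 < r < 1, S(r) and Q(r) are not isometric. -/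
open Metric Set

/-- The 1-dimensional periodic point set with motif `M ⊂ [0, 8)` and period 8. -/
def periodic8 (M : Set ℝ) : Set ℝ := {x | ∃ t ∈ M, ∃ z : ℤ, x = t + 8 * z}

/-- `S(r) = {0, r, r+2, 4} + 8ℤ`. -/
def Sper (r : ℝ) : Set ℝ := periodic8 {0, r, r + 2, 4}

/-- `Q(r) = {0, r+2, 4, r+4} + 8ℤ`. -/
def Qper (r : ℝ) : Set ℝ := periodic8 {0, r + 2, 4, r + 4}

lemma mem_Sper {r x : ℝ} :
    x ∈ Sper r ↔ ∃ z : ℤ, x = 8*z ∨ x = r + 8*z ∨ x = (r+2) + 8*z ∨ x = 4 + 8*z := by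
  constructor
  · rintro ⟨t, ht, z, rfl⟩
    refine ⟨z, ?_⟩
    simp only [Set.mem_insert_iff, Set.mem_singleton_iff] at ht
    rcases ht with rfl|rfl|rfl|rfl
    · exact Or.inl (by ring)
    · exact Or.inr (Or.inl rfl)
    · exact Or.inr (Or.inr (Or.inl rfl))
    · exact Or.inr (Or.inr (Or.inr rfl))
  · rintro ⟨z, rfl|rfl|rfl|rfl⟩
    · exact ⟨0, by simp, z, by ring⟩
    · exact ⟨r, by simp, z, rfl⟩
    · exact ⟨r+2, by simp, z, rfl⟩
    · exact ⟨4, by simp, z, rfl⟩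

lemma mem_Qper {r x : ℝ} :
    x ∈ Qper r ↔ ∃ z : ℤ, x = 8*z ∨ x = (r+2) + 8*z ∨ x = 4 + 8*z ∨ x = (r+4) + 8*z := by
  constructor
  · rintro ⟨t, ht, z, rfl⟩
    refine ⟨z, ?_⟩
    simp only [Set.mem_insert_iff, Set.mem_singleton_iff] at ht
    rcases ht with rfl|rfl|rfl|rfl
    · exact Or.inl (by ring)
    · exact Or.inr (Or.inl rfl)
    · exact Or.inr (Or.inr (Or.inl rfl))
    · exact Or.inr (Or.inr (Or.inr rfl))
  · rintro ⟨z, rfl|rfl|rfl|rfl⟩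
    · exact ⟨0, by simp, z, by ring⟩
    · exact ⟨r+2, by simp, z, rfl⟩
    · exact ⟨4, by simp, z, rfl⟩
    · exact ⟨r+4, by simp, z, rfl⟩

lemma off_period (t p d : ℝ) (z : ℤ) (hz : z ≠ 0) (h1 : d - 8 ≤ t - p) (h2 : t - p ≤ 8 - d) :
    d ≤ |t + 8*z - p| := by
  rw [le_abs]
  rcases lt_or_gt_of_ne hz with h | h
  · have hz' : (z:ℝ) ≤ -1 := by exact_mod_cast Int.le_sub_one_of_lt h
    right; linarith
  · have hz' : (1:ℝ) ≤ (z:ℝ) := by exact_mod_cast h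
    left; linarith

lemma periodic8_finite {M : Set ℝ} (hM : M.Finite) (p s : ℝ) :
    (periodic8 M ∩ Metric.closedBall p s).Finite := by
  have hsub : periodic8 M ∩ Metric.closedBall p s ⊆
      ⋃ t ∈ M, (fun z : ℤ => t + 8*z) '' Set.Icc ⌈(p-s-t)/8⌉ ⌊(p+s-t)/8⌋ := by
    rintro x ⟨⟨t, ht, z, rfl⟩, hx⟩
    rw [Metric.mem_closedBall, Real.dist_eq, abs_le] at hx
    refine Set.mem_biUnion ht ⟨z, ⟨?_, ?_⟩, rfl⟩
    · rw [Int.ceil_le, div_le_iff₀ (by norm_num : (0:ℝ) < 8)]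
      linarith [hx.1]
    · rw [Int.le_floor, le_div_iff₀ (by norm_num : (0:ℝ) < 8)]
      linarith [hx.2]
  exact ((hM.biUnion fun t _ => (Set.finite_Icc _ _).image _).subset hsub)

lemma kthNNDist_eq (X : Set ℝ) (p d : ℝ) (k : ℕ)
    (hmem : k ≤ ((X \ {p}) ∩ Metric.closedBall p d).ncard)
    (hlb : ∀ s : ℝ, s < d → ((X \ {p}) ∩ Metric.closedBall p s).ncard < k) :
    kthNNDist X p k = d := by
  unfold kthNNDist
  have hl : ∀ s ∈ {s : ℝ | k ≤ Nat.card ↥((X \ {p}) ∩ Metric.closedBall p s)}, d ≤ s := by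
    intro s hs
    by_contra h
    rw [Set.mem_setOf_eq, Nat.card_coe_set_eq] at hs
    exact absurd hs (not_le.mpr (hlb s (lt_of_not_ge h)))
  have hd : d ∈ {s : ℝ | k ≤ Nat.card ↥((X \ {p}) ∩ Metric.closedBall p s)} := by
    rw [Set.mem_setOf_eq, Nat.card_coe_set_eq]; exact hmem
  exact le_antisymm (csInf_le ⟨d, hl⟩ hd) (le_csInf ⟨d, hd⟩ hl)

lemma kth1 (X : Set ℝ) (p d q : ℝ)
    (hfin : ((X \ {p}) ∩ Metric.closedBall p d).Finite)
    (hq : q ∈ X) (hqp : q ≠ p) (hqd : |q - p| ≤ d)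
    (hlow : ∀ x ∈ X, x ≠ p → d ≤ |x - p|) : kthNNDist X p 1 = d := by
  apply kthNNDist_eq
  · exact (Set.ncard_pos hfin).mpr ⟨q, ⟨hq, hqp⟩, by rwa [Metric.mem_closedBall, Real.dist_eq]⟩
  · intro s hs
    have : (X \ {p}) ∩ Metric.closedBall p s = ∅ := by
      rw [Set.eq_empty_iff_forall_notMem]
      rintro x ⟨⟨hx, hxp⟩, hxb⟩
      rw [Metric.mem_closedBall, Real.dist_eq] at hxb
      exact absurd hxb (not_le.mpr (lt_of_lt_of_le hs (hlow x hx hxp)))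
    simp [this]

lemma kth2 (X : Set ℝ) (p d q₁ q₂ : ℝ)
    (hfin : ((X \ {p}) ∩ Metric.closedBall p d).Finite)
    (hq₁ : q₁ ∈ X) (hq₂ : q₂ ∈ X) (hne : q₁ ≠ q₂) (h1p : q₁ ≠ p) (h2p : q₂ ≠ p)
    (hd1 : |q₁ - p| ≤ d) (hd2 : |q₂ - p| ≤ d)
    (hlow : ∀ x ∈ X, x ≠ p → x ≠ q₁ → d ≤ |x - p|) : kthNNDist X p 2 = d := by
  apply kthNNDist_eq
  · have : 1 < ((X \ {p}) ∩ Metric.closedBall p d).ncard := by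
      rw [Set.one_lt_ncard_iff hfin]
      exact ⟨q₁, q₂, ⟨⟨hq₁, h1p⟩, by rwa [Metric.mem_closedBall, Real.dist_eq]⟩,
        ⟨⟨hq₂, h2p⟩, by rwa [Metric.mem_closedBall, Real.dist_eq]⟩, hne⟩
    omega
  · intro s hs
    have hsub : (X \ {p}) ∩ Metric.closedBall p s ⊆ {q₁} := by
      rintro x ⟨⟨hx, hxp⟩, hxb⟩
      rw [Metric.mem_closedBall, Real.dist_eq] at hxb
      by_contra hxq
      exact absurd hxb (not_le.mpr (lt_of_lt_of_le hs (hlow x hx hxp hxq)))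
    have := Set.ncard_le_ncard hsub (Set.finite_singleton q₁)
    rw [Set.ncard_singleton] at this
    omega

lemma kth_image {f : ℝ → ℝ} (hf : Isometry f) (X : Set ℝ) (p : ℝ) (k : ℕ) :
    kthNNDist (f '' X) (f p) k = kthNNDist X p k := by
  unfold kthNNDist
  congr 1
  ext s
  simp only [Set.mem_setOf_eq]
  have himg : (f '' X \ {f p}) ∩ Metric.closedBall (f p) s
      = f '' ((X \ {p}) ∩ Metric.closedBall p s) := by
    ext y
    constructor
    · rintro ⟨⟨⟨x, hx, rfl⟩, hne⟩, hb⟩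
      refine ⟨x, ⟨⟨hx, fun h => hne (by rw [Set.mem_singleton_iff, h])⟩, ?_⟩, rfl⟩
      rwa [Metric.mem_closedBall, ← hf.dist_eq x p]
    · rintro ⟨x, ⟨⟨hx, hxp⟩, hb⟩, rfl⟩
      refine ⟨⟨⟨x, hx, rfl⟩, fun h => hxp (by
        rw [Set.mem_singleton_iff] at h ⊢; exact hf.injective h)⟩, ?_⟩
      rwa [Metric.mem_closedBall, hf.dist_eq]
  rw [himg, Nat.card_coe_set_eq, Nat.card_coe_set_eq,
    Set.ncard_image_of_injective _ hf.injective]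

lemma periodic8_shift (M : Set ℝ) (z : ℤ) :
    (fun x : ℝ => x + 8*(z:ℝ)) '' periodic8 M = periodic8 M := by
  ext x
  constructor
  · rintro ⟨y, ⟨t, ht, w, rfl⟩, rfl⟩
    exact ⟨t, ht, w + z, by push_cast; ring⟩
  · rintro ⟨t, ht, w, rfl⟩
    exact ⟨t + 8*(w - z : ℤ), ⟨t, ht, w - z, rfl⟩, by push_cast; ring⟩

lemma kth_shift (M : Set ℝ) (t : ℝ) (z : ℤ) (k : ℕ) :
    kthNNDist (periodic8 M) (t + 8*(z:ℝ)) k = kthNNDist (periodic8 M) t k := by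
  have hiso : Isometry (fun x : ℝ => x + 8*(z:ℝ)) := Isometry.of_dist_eq fun a b => by
    simp [Real.dist_eq]
  have := kth_image hiso (periodic8 M) t k
  rwa [periodic8_shift] at this
lemma Sper_fin (r p d : ℝ) : ((Sper r \ {p}) ∩ Metric.closedBall p d).Finite := by
  have h := periodic8_finite (M := {0, r, r+2, 4})
    (Set.Finite.insert _ (Set.Finite.insert _ (Set.Finite.insert _ (Set.finite_singleton _)))) p d
  exact h.subset fun x hx => ⟨hx.1.1, hx.2⟩

lemma Qper_fin (r p d : ℝ) : ((Qper r \ {p}) ∩ Metric.closedBall p d).Finite := by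
  have h := periodic8_finite (M := {0, r+2, 4, r+4})
    (Set.Finite.insert _ (Set.Finite.insert _ (Set.Finite.insert _ (Set.finite_singleton _)))) p d
  exact h.subset fun x hx => ⟨hx.1.1, hx.2⟩

section
set_option linter.unreachableTactic false
set_option linter.unusedTactic false
variable {r : ℝ} (hr0 : 0 < r) (hr1 : r ≤ 1)
include hr0 hr1

lemma hS01 : kthNNDist (Sper r) 0 1 = r := by
  apply kth1 _ _ _ r (Sper_fin r 0 r) (mem_Sper.mpr ⟨(0:ℤ), (Or.inr (Or.inl (by push_cast; ring)))⟩)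
    (by intro h; linarith) (by rw [abs_le]; constructor <;> linarith)
  intro x hx hxp
  obtain ⟨z, hx⟩ := mem_Sper.mp hx
  by_cases hz : z = 0
  · subst hz
    simp only [Int.cast_zero, mul_zero, add_zero] at hx
    rcases hx with rfl|rfl|rfl|rfl <;>
      first
        | exact absurd rfl hxp
        | (rw [le_abs]; left; linarith)
        | (rw [le_abs]; right; linarith)
  · rcases hx with rfl|rfl|rfl|rfl <;>
      first
        | simpa using off_period 0 0 r z hz (by linarith) (by linarith)
        | simpa using off_period r 0 r z hz (by linarith) (by linarith)
        | simpa using off_period (r+2) 0 r z hz (by linarith) (by linarith)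
        | simpa using off_period 4 0 r z hz (by linarith) (by linarith)

lemma hS02 : kthNNDist (Sper r) 0 2 = (r+2) := by
  apply kth2 _ _ _ r (r+2) (Sper_fin r 0 (r+2)) (mem_Sper.mpr ⟨(0:ℤ), (Or.inr (Or.inl (by push_cast; ring)))⟩)
    (mem_Sper.mpr ⟨(0:ℤ), (Or.inr (Or.inr (Or.inl (by push_cast; ring))))⟩)
    (by intro h; linarith) (by intro h; linarith) (by intro h; linarith)
    (by rw [abs_le]; constructor <;> linarith) (by rw [abs_le]; constructor <;> linarith)
  intro x hx hxp hxq
  obtain ⟨z, hx⟩ := mem_Sper.mp hx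
  by_cases hz : z = 0
  · subst hz
    simp only [Int.cast_zero, mul_zero, add_zero] at hx
    rcases hx with rfl|rfl|rfl|rfl <;>
      first
        | exact absurd rfl hxp
        | exact absurd rfl hxq
        | (rw [le_abs]; left; linarith)
        | (rw [le_abs]; right; linarith)
  · rcases hx with rfl|rfl|rfl|rfl <;>
      first
        | simpa using off_period 0 0 (r+2) z hz (by linarith) (by linarith)
        | simpa using off_period r 0 (r+2) z hz (by linarith) (by linarith)
        | simpa using off_period (r+2) 0 (r+2) z hz (by linarith) (by linarith)
        | simpa using off_period 4 0 (r+2) z hz (by linarith) (by linarith)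

lemma hSr1 : kthNNDist (Sper r) r 1 = r := by
  apply kth1 _ _ _ 0 (Sper_fin r r r) (mem_Sper.mpr ⟨(0:ℤ), (Or.inl (by push_cast; ring))⟩)
    (by intro h; linarith) (by rw [abs_le]; constructor <;> linarith)
  intro x hx hxp
  obtain ⟨z, hx⟩ := mem_Sper.mp hx
  by_cases hz : z = 0
  · subst hz
    simp only [Int.cast_zero, mul_zero, add_zero] at hx
    rcases hx with rfl|rfl|rfl|rfl <;>
      first
        | exact absurd rfl hxp
        | (rw [le_abs]; left; linarith)
        | (rw [le_abs]; right; linarith)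
  · rcases hx with rfl|rfl|rfl|rfl <;>
      first
        | simpa using off_period 0 r r z hz (by linarith) (by linarith)
        | simpa using off_period r r r z hz (by linarith) (by linarith)
        | simpa using off_period (r+2) r r z hz (by linarith) (by linarith)
        | simpa using off_period 4 r r z hz (by linarith) (by linarith)

lemma hSr2 : kthNNDist (Sper r) r 2 = 2 := by
  apply kth2 _ _ _ 0 (r+2) (Sper_fin r r 2) (mem_Sper.mpr ⟨(0:ℤ), (Or.inl (by push_cast; ring))⟩)
    (mem_Sper.mpr ⟨(0:ℤ), (Or.inr (Or.inr (Or.inl (by push_cast; ring))))⟩)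
    (by intro h; linarith) (by intro h; linarith) (by intro h; linarith)
    (by rw [abs_le]; constructor <;> linarith) (by rw [abs_le]; constructor <;> linarith)
  intro x hx hxp hxq
  obtain ⟨z, hx⟩ := mem_Sper.mp hx
  by_cases hz : z = 0
  · subst hz
    simp only [Int.cast_zero, mul_zero, add_zero] at hx
    rcases hx with rfl|rfl|rfl|rfl <;>
      first
        | exact absurd rfl hxp
        | exact absurd rfl hxq
        | (rw [le_abs]; left; linarith)
        | (rw [le_abs]; right; linarith)
  · rcases hx with rfl|rfl|rfl|rfl <;>
      first
        | simpa using off_period 0 r 2 z hz (by linarith) (by linarith)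
        | simpa using off_period r r 2 z hz (by linarith) (by linarith)
        | simpa using off_period (r+2) r 2 z hz (by linarith) (by linarith)
        | simpa using off_period 4 r 2 z hz (by linarith) (by linarith)

lemma hSr21 : kthNNDist (Sper r) (r+2) 1 = (2-r) := by
  apply kth1 _ _ _ 4 (Sper_fin r (r+2) (2-r)) (mem_Sper.mpr ⟨(0:ℤ), (Or.inr (Or.inr (Or.inr (by push_cast; ring))))⟩)
    (by intro h; linarith) (by rw [abs_le]; constructor <;> linarith)
  intro x hx hxp
  obtain ⟨z, hx⟩ := mem_Sper.mp hx
  by_cases hz : z = 0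
  · subst hz
    simp only [Int.cast_zero, mul_zero, add_zero] at hx
    rcases hx with rfl|rfl|rfl|rfl <;>
      first
        | exact absurd rfl hxp
        | (rw [le_abs]; left; linarith)
        | (rw [le_abs]; right; linarith)
  · rcases hx with rfl|rfl|rfl|rfl <;>
      first
        | simpa using off_period 0 (r+2) (2-r) z hz (by linarith) (by linarith)
        | simpa using off_period r (r+2) (2-r) z hz (by linarith) (by linarith)
        | simpa using off_period (r+2) (r+2) (2-r) z hz (by linarith) (by linarith)
        | simpa using off_period 4 (r+2) (2-r) z hz (by linarith) (by linarith)

lemma hSr22 : kthNNDist (Sper r) (r+2) 2 = 2 := by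
  apply kth2 _ _ _ 4 r (Sper_fin r (r+2) 2) (mem_Sper.mpr ⟨(0:ℤ), (Or.inr (Or.inr (Or.inr (by push_cast; ring))))⟩)
    (mem_Sper.mpr ⟨(0:ℤ), (Or.inr (Or.inl (by push_cast; ring)))⟩)
    (by intro h; linarith) (by intro h; linarith) (by intro h; linarith)
    (by rw [abs_le]; constructor <;> linarith) (by rw [abs_le]; constructor <;> linarith)
  intro x hx hxp hxq
  obtain ⟨z, hx⟩ := mem_Sper.mp hx
  by_cases hz : z = 0
  · subst hz
    simp only [Int.cast_zero, mul_zero, add_zero] at hx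
    rcases hx with rfl|rfl|rfl|rfl <;>
      first
        | exact absurd rfl hxp
        | exact absurd rfl hxq
        | (rw [le_abs]; left; linarith)
        | (rw [le_abs]; right; linarith)
  · rcases hx with rfl|rfl|rfl|rfl <;>
      first
        | simpa using off_period 0 (r+2) 2 z hz (by linarith) (by linarith)
        | simpa using off_period r (r+2) 2 z hz (by linarith) (by linarith)
        | simpa using off_period (r+2) (r+2) 2 z hz (by linarith) (by linarith)
        | simpa using off_period 4 (r+2) 2 z hz (by linarith) (by linarith)

lemma hS41 : kthNNDist (Sper r) 4 1 = (2-r) := by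
  apply kth1 _ _ _ (r+2) (Sper_fin r 4 (2-r)) (mem_Sper.mpr ⟨(0:ℤ), (Or.inr (Or.inr (Or.inl (by push_cast; ring))))⟩)
    (by intro h; linarith) (by rw [abs_le]; constructor <;> linarith)
  intro x hx hxp
  obtain ⟨z, hx⟩ := mem_Sper.mp hx
  by_cases hz : z = 0
  · subst hz
    simp only [Int.cast_zero, mul_zero, add_zero] at hx
    rcases hx with rfl|rfl|rfl|rfl <;>
      first
        | exact absurd rfl hxp
        | (rw [le_abs]; left; linarith)
        | (rw [le_abs]; right; linarith)
  · rcases hx with rfl|rfl|rfl|rfl <;>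
      first
        | simpa using off_period 0 4 (2-r) z hz (by linarith) (by linarith)
        | simpa using off_period r 4 (2-r) z hz (by linarith) (by linarith)
        | simpa using off_period (r+2) 4 (2-r) z hz (by linarith) (by linarith)
        | simpa using off_period 4 4 (2-r) z hz (by linarith) (by linarith)

lemma hS42 : kthNNDist (Sper r) 4 2 = (4-r) := by
  apply kth2 _ _ _ (r+2) r (Sper_fin r 4 (4-r)) (mem_Sper.mpr ⟨(0:ℤ), (Or.inr (Or.inr (Or.inl (by push_cast; ring))))⟩)
    (mem_Sper.mpr ⟨(0:ℤ), (Or.inr (Or.inl (by push_cast; ring)))⟩)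
    (by intro h; linarith) (by intro h; linarith) (by intro h; linarith)
    (by rw [abs_le]; constructor <;> linarith) (by rw [abs_le]; constructor <;> linarith)
  intro x hx hxp hxq
  obtain ⟨z, hx⟩ := mem_Sper.mp hx
  by_cases hz : z = 0
  · subst hz
    simp only [Int.cast_zero, mul_zero, add_zero] at hx
    rcases hx with rfl|rfl|rfl|rfl <;>
      first
        | exact absurd rfl hxp
        | exact absurd rfl hxq
        | (rw [le_abs]; left; linarith)
        | (rw [le_abs]; right; linarith)
  · rcases hx with rfl|rfl|rfl|rfl <;>
      first
        | simpa using off_period 0 4 (4-r) z hz (by linarith) (by linarith)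
        | simpa using off_period r 4 (4-r) z hz (by linarith) (by linarith)
        | simpa using off_period (r+2) 4 (4-r) z hz (by linarith) (by linarith)
        | simpa using off_period 4 4 (4-r) z hz (by linarith) (by linarith)

lemma hQ01 : kthNNDist (Qper r) 0 1 = (r+2) := by
  apply kth1 _ _ _ (r+2) (Qper_fin r 0 (r+2)) (mem_Qper.mpr ⟨(0:ℤ), (Or.inr (Or.inl (by push_cast; ring)))⟩)
    (by intro h; linarith) (by rw [abs_le]; constructor <;> linarith)
  intro x hx hxp
  obtain ⟨z, hx⟩ := mem_Qper.mp hx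
  by_cases hz : z = 0
  · subst hz
    simp only [Int.cast_zero, mul_zero, add_zero] at hx
    rcases hx with rfl|rfl|rfl|rfl <;>
      first
        | exact absurd rfl hxp
        | (rw [le_abs]; left; linarith)
        | (rw [le_abs]; right; linarith)
  · rcases hx with rfl|rfl|rfl|rfl <;>
      first
        | simpa using off_period 0 0 (r+2) z hz (by linarith) (by linarith)
        | simpa using off_period (r+2) 0 (r+2) z hz (by linarith) (by linarith)
        | simpa using off_period 4 0 (r+2) z hz (by linarith) (by linarith)
        | simpa using off_period (r+4) 0 (r+2) z hz (by linarith) (by linarith)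

lemma hQ02 : kthNNDist (Qper r) 0 2 = (4-r) := by
  apply kth2 _ _ _ (r+2) (r-4) (Qper_fin r 0 (4-r)) (mem_Qper.mpr ⟨(0:ℤ), (Or.inr (Or.inl (by push_cast; ring)))⟩)
    (mem_Qper.mpr ⟨(-1:ℤ), (Or.inr (Or.inr (Or.inr (by push_cast; ring))))⟩)
    (by intro h; linarith) (by intro h; linarith) (by intro h; linarith)
    (by rw [abs_le]; constructor <;> linarith) (by rw [abs_le]; constructor <;> linarith)
  intro x hx hxp hxq
  obtain ⟨z, hx⟩ := mem_Qper.mp hx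
  by_cases hz : z = 0
  · subst hz
    simp only [Int.cast_zero, mul_zero, add_zero] at hx
    rcases hx with rfl|rfl|rfl|rfl <;>
      first
        | exact absurd rfl hxp
        | exact absurd rfl hxq
        | (rw [le_abs]; left; linarith)
        | (rw [le_abs]; right; linarith)
  · rcases hx with rfl|rfl|rfl|rfl <;>
      first
        | simpa using off_period 0 0 (4-r) z hz (by linarith) (by linarith)
        | simpa using off_period (r+2) 0 (4-r) z hz (by linarith) (by linarith)
        | simpa using off_period 4 0 (4-r) z hz (by linarith) (by linarith)
        | simpa using off_period (r+4) 0 (4-r) z hz (by linarith) (by linarith)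

lemma hQr21 : kthNNDist (Qper r) (r+2) 1 = (2-r) := by
  apply kth1 _ _ _ 4 (Qper_fin r (r+2) (2-r)) (mem_Qper.mpr ⟨(0:ℤ), (Or.inr (Or.inr (Or.inl (by push_cast; ring))))⟩)
    (by intro h; linarith) (by rw [abs_le]; constructor <;> linarith)
  intro x hx hxp
  obtain ⟨z, hx⟩ := mem_Qper.mp hx
  by_cases hz : z = 0
  · subst hz
    simp only [Int.cast_zero, mul_zero, add_zero] at hx
    rcases hx with rfl|rfl|rfl|rfl <;>
      first
        | exact absurd rfl hxp
        | (rw [le_abs]; left; linarith)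
        | (rw [le_abs]; right; linarith)
  · rcases hx with rfl|rfl|rfl|rfl <;>
      first
        | simpa using off_period 0 (r+2) (2-r) z hz (by linarith) (by linarith)
        | simpa using off_period (r+2) (r+2) (2-r) z hz (by linarith) (by linarith)
        | simpa using off_period 4 (r+2) (2-r) z hz (by linarith) (by linarith)
        | simpa using off_period (r+4) (r+2) (2-r) z hz (by linarith) (by linarith)

lemma hQr22 : kthNNDist (Qper r) (r+2) 2 = 2 := by
  apply kth2 _ _ _ 4 (r+4) (Qper_fin r (r+2) 2) (mem_Qper.mpr ⟨(0:ℤ), (Or.inr (Or.inr (Or.inl (by push_cast; ring))))⟩)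
    (mem_Qper.mpr ⟨(0:ℤ), (Or.inr (Or.inr (Or.inr (by push_cast; ring))))⟩)
    (by intro h; linarith) (by intro h; linarith) (by intro h; linarith)
    (by rw [abs_le]; constructor <;> linarith) (by rw [abs_le]; constructor <;> linarith)
  intro x hx hxp hxq
  obtain ⟨z, hx⟩ := mem_Qper.mp hx
  by_cases hz : z = 0
  · subst hz
    simp only [Int.cast_zero, mul_zero, add_zero] at hx
    rcases hx with rfl|rfl|rfl|rfl <;>
      first
        | exact absurd rfl hxp
        | exact absurd rfl hxq
        | (rw [le_abs]; left; linarith)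
        | (rw [le_abs]; right; linarith)
  · rcases hx with rfl|rfl|rfl|rfl <;>
      first
        | simpa using off_period 0 (r+2) 2 z hz (by linarith) (by linarith)
        | simpa using off_period (r+2) (r+2) 2 z hz (by linarith) (by linarith)
        | simpa using off_period 4 (r+2) 2 z hz (by linarith) (by linarith)
        | simpa using off_period (r+4) (r+2) 2 z hz (by linarith) (by linarith)

lemma hQ41 : kthNNDist (Qper r) 4 1 = r := by
  apply kth1 _ _ _ (r+4) (Qper_fin r 4 r) (mem_Qper.mpr ⟨(0:ℤ), (Or.inr (Or.inr (Or.inr (by push_cast; ring))))⟩)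
    (by intro h; linarith) (by rw [abs_le]; constructor <;> linarith)
  intro x hx hxp
  obtain ⟨z, hx⟩ := mem_Qper.mp hx
  by_cases hz : z = 0
  · subst hz
    simp only [Int.cast_zero, mul_zero, add_zero] at hx
    rcases hx with rfl|rfl|rfl|rfl <;>
      first
        | exact absurd rfl hxp
        | (rw [le_abs]; left; linarith)
        | (rw [le_abs]; right; linarith)
  · rcases hx with rfl|rfl|rfl|rfl <;>
      first
        | simpa using off_period 0 4 r z hz (by linarith) (by linarith)
        | simpa using off_period (r+2) 4 r z hz (by linarith) (by linarith)
        | simpa using off_period 4 4 r z hz (by linarith) (by linarith)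
        | simpa using off_period (r+4) 4 r z hz (by linarith) (by linarith)

lemma hQ42 : kthNNDist (Qper r) 4 2 = (2-r) := by
  apply kth2 _ _ _ (r+4) (r+2) (Qper_fin r 4 (2-r)) (mem_Qper.mpr ⟨(0:ℤ), (Or.inr (Or.inr (Or.inr (by push_cast; ring))))⟩)
    (mem_Qper.mpr ⟨(0:ℤ), (Or.inr (Or.inl (by push_cast; ring)))⟩)
    (by intro h; linarith) (by intro h; linarith) (by intro h; linarith)
    (by rw [abs_le]; constructor <;> linarith) (by rw [abs_le]; constructor <;> linarith)
  intro x hx hxp hxq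
  obtain ⟨z, hx⟩ := mem_Qper.mp hx
  by_cases hz : z = 0
  · subst hz
    simp only [Int.cast_zero, mul_zero, add_zero] at hx
    rcases hx with rfl|rfl|rfl|rfl <;>
      first
        | exact absurd rfl hxp
        | exact absurd rfl hxq
        | (rw [le_abs]; left; linarith)
        | (rw [le_abs]; right; linarith)
  · rcases hx with rfl|rfl|rfl|rfl <;>
      first
        | simpa using off_period 0 4 (2-r) z hz (by linarith) (by linarith)
        | simpa using off_period (r+2) 4 (2-r) z hz (by linarith) (by linarith)
        | simpa using off_period 4 4 (2-r) z hz (by linarith) (by linarith)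
        | simpa using off_period (r+4) 4 (2-r) z hz (by linarith) (by linarith)

lemma hQr41 : kthNNDist (Qper r) (r+4) 1 = r := by
  apply kth1 _ _ _ 4 (Qper_fin r (r+4) r) (mem_Qper.mpr ⟨(0:ℤ), (Or.inr (Or.inr (Or.inl (by push_cast; ring))))⟩)
    (by intro h; linarith) (by rw [abs_le]; constructor <;> linarith)
  intro x hx hxp
  obtain ⟨z, hx⟩ := mem_Qper.mp hx
  by_cases hz : z = 0
  · subst hz
    simp only [Int.cast_zero, mul_zero, add_zero] at hx
    rcases hx with rfl|rfl|rfl|rfl <;>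
      first
        | exact absurd rfl hxp
        | (rw [le_abs]; left; linarith)
        | (rw [le_abs]; right; linarith)
  · rcases hx with rfl|rfl|rfl|rfl <;>
      first
        | simpa using off_period 0 (r+4) r z hz (by linarith) (by linarith)
        | simpa using off_period (r+2) (r+4) r z hz (by linarith) (by linarith)
        | simpa using off_period 4 (r+4) r z hz (by linarith) (by linarith)
        | simpa using off_period (r+4) (r+4) r z hz (by linarith) (by linarith)

lemma hQr42 : kthNNDist (Qper r) (r+4) 2 = 2 := by
  apply kth2 _ _ _ 4 (r+2) (Qper_fin r (r+4) 2) (mem_Qper.mpr ⟨(0:ℤ), (Or.inr (Or.inr (Or.inl (by push_cast; ring))))⟩)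
    (mem_Qper.mpr ⟨(0:ℤ), (Or.inr (Or.inl (by push_cast; ring)))⟩)
    (by intro h; linarith) (by intro h; linarith) (by intro h; linarith)
    (by rw [abs_le]; constructor <;> linarith) (by rw [abs_le]; constructor <;> linarith)
  intro x hx hxp hxq
  obtain ⟨z, hx⟩ := mem_Qper.mp hx
  by_cases hz : z = 0
  · subst hz
    simp only [Int.cast_zero, mul_zero, add_zero] at hx
    rcases hx with rfl|rfl|rfl|rfl <;>
      first
        | exact absurd rfl hxp
        | exact absurd rfl hxq
        | (rw [le_abs]; left; linarith)
        | (rw [le_abs]; right; linarith)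
  · rcases hx with rfl|rfl|rfl|rfl <;>
      first
        | simpa using off_period 0 (r+4) 2 z hz (by linarith) (by linarith)
        | simpa using off_period (r+2) (r+4) 2 z hz (by linarith) (by linarith)
        | simpa using off_period 4 (r+4) 2 z hz (by linarith) (by linarith)
        | simpa using off_period (r+4) (r+4) 2 z hz (by linarith) (by linarith)

end


/-- `AMD_k` of `S(r)`, averaged over the 4-point motif. -/
noncomputable def AMDS (r : ℝ) (k : ℕ) : ℝ :=
  (kthNNDist (Sper r) 0 k + kthNNDist (Sper r) r k +
   kthNNDist (Sper r) (r + 2) k + kthNNDist (Sper r) 4 k) / 4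

/-- `AMD_k` of `Q(r)`, averaged over the 4-point motif. -/
noncomputable def AMDQ (r : ℝ) (k : ℕ) : ℝ :=
  (kthNNDist (Qper r) 0 k + kthNNDist (Qper r) (r + 2) k +
   kthNNDist (Qper r) 4 k + kthNNDist (Qper r) (r + 4) k) / 4

/-- For `0 < r ≤ 1`: `AMD₁(S(r)) = 1`, `AMD₂(S(r)) = 5/2`, `AMD₁(Q(r)) = 1 + r/2`,
`AMD₂(Q(r)) = 5/2 − r/2`; in particular, for `0 < r < 1` the periodic sets `S(r)` and `Q(r)`
are not isometric. -/
theorem SQr_AMD (r : ℝ) (hr0 : 0 < r) (hr1 : r ≤ 1) :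
    AMDS r 1 = 1 ∧ AMDS r 2 = 5 / 2 ∧
    AMDQ r 1 = 1 + r / 2 ∧ AMDQ r 2 = 5 / 2 - r / 2 ∧
    (r < 1 → ¬ ∃ f : ℝ → ℝ, Isometry f ∧ f '' Sper r = Qper r) := by
  refine ⟨?_, ?_, ?_, ?_, ?_⟩
  · unfold AMDS
    rw [hS01 hr0 hr1, hSr1 hr0 hr1, hSr21 hr0 hr1, hS41 hr0 hr1]; ring
  · unfold AMDS
    rw [hS02 hr0 hr1, hSr2 hr0 hr1, hSr22 hr0 hr1, hS42 hr0 hr1]; ring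
  · unfold AMDQ
    rw [hQ01 hr0 hr1, hQr21 hr0 hr1, hQ41 hr0 hr1, hQr41 hr0 hr1]; ring
  · unfold AMDQ
    rw [hQ02 hr0 hr1, hQr22 hr0 hr1, hQ42 hr0 hr1, hQr42 hr0 hr1]; ring
  · rintro hrlt ⟨f, hf, hfS⟩
    have h4Q : (4:ℝ) ∈ Qper r :=
      mem_Qper.mpr ⟨0, Or.inr (Or.inr (Or.inl (by push_cast; ring)))⟩
    rw [← hfS] at h4Q
    obtain ⟨p, hp, hfp⟩ := h4Q
    have hinv : kthNNDist (Qper r) 4 2 = kthNNDist (Sper r) p 2 := by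
      rw [← hfp, ← hfS]; exact kth_image hf _ p 2
    rw [hQ42 hr0 hr1] at hinv
    obtain ⟨z, hc⟩ := mem_Sper.mp hp
    have hs : ∀ t : ℝ, kthNNDist (Sper r) (t + 8*(z:ℝ)) 2 = kthNNDist (Sper r) t 2 :=
      fun t => kth_shift {0, r, r+2, 4} t z 2
    rcases hc with rfl|rfl|rfl|rfl
    · rw [show (8*(z:ℝ)) = 0 + 8*(z:ℝ) by ring, hs 0, hS02 hr0 hr1] at hinv; linarith
    · rw [hs r, hSr2 hr0 hr1] at hinv; linarith
    · rw [hs (r+2), hSr22 hr0 hr1] at hinv; linarith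
    · rw [hs 4, hS42 hr0 hr1] at hinv; linarith
end
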